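/- arXiv:1411.5216 — 2 statements merged into one kernel-verified Lean document; each statement's English description precedes it below -/
import Mathlib

section
/- The integral over the triangle {(x,y) : 0<x<π, 0<y<π, x+y<π} of (24√3/π)·sin(x)²·sin(y)²·sin(x+y)²/(sin(x)²+sin(y)²+sin(x+y)²)^3 equals 1. -/
/-!
By Fubini the integral is `∫₀^π ∫₀^{π-x}`. Substituting `u = x + 2y`, one has
`sin² y sin² (x+y) = (cos x - cos u)² / 4` and
`sin² x + sin² y + sin² (x+y) = 1 + sin² x - cos x cos u`, so the inner integrand is a rational
function of `cos u` with an elementary primitive: a rational term plus a multiple of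
`u + 2 arctan (c sin u / (a - c cos u + k))`, the primitive of `k / (a - c cos u)` when
`k² = a² - c²`. The resulting function of `x` again has an explicit primitive, and its values at
`0` and `π` give `π / (24 √3)`.
-/

open MeasureTheory Real

lemma sin_sq_mul_sin_add_sq (x y : ℝ) :
    sin y ^ 2 * sin (x + y) ^ 2 = (cos x - cos (x + 2 * y)) ^ 2 / 4 := by
  have h := cos_sub_cos x (x + 2 * y)
  rw [show (x + (x + 2 * y)) / 2 = x + y by ring, show (x - (x + 2 * y)) / 2 = -y by ring,
    sin_neg] at h
  rw [h]; ring

lemma sin_sq_add_sin_sq_add_sin_add_sq (x y : ℝ) :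
    sin x ^ 2 + sin y ^ 2 + sin (x + y) ^ 2 = 1 + sin x ^ 2 - cos x * cos (x + 2 * y) := by
  have h := cos_add_cos (2 * y) (2 * (x + y))
  rw [show (2 * y + 2 * (x + y)) / 2 = x + 2 * y by ring,
    show (2 * y - 2 * (x + y)) / 2 = -x by ring, cos_neg] at h
  rw [sin_sq_eq_half_sub y, sin_sq_eq_half_sub (x + y)]
  linear_combination (-1/2 : ℝ) * h

lemma mul_mul_div_add_add_pow_three_le {a b c : ℝ} (ha : 0 ≤ a) (hb : 0 ≤ b) (hc : 0 ≤ c) :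
    a * b * c / (a + b + c) ^ 3 ≤ 1 / 27 := by
  rcases (add_nonneg (add_nonneg ha hb) hc).eq_or_lt with h | h
  · rw [← h]; norm_num
  rw [div_le_div_iff₀ (by positivity) (by norm_num)]
  nlinarith [mul_nonneg hc (sq_nonneg (a - b)), mul_nonneg ha (sq_nonneg (b - c)),
    mul_nonneg hb (sq_nonneg (a - c)), mul_nonneg h.le (sq_nonneg (a - b)),
    mul_nonneg h.le (sq_nonneg (b - c)), mul_nonneg h.le (sq_nonneg (a - c))]

lemma mul_cos_lt_of_sq_lt_sq {a c : ℝ} (h : c ^ 2 < a ^ 2) (ha : 0 < a) (u : ℝ) :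
    c * cos u < a :=
  calc c * cos u ≤ |c| := (le_abs_self _).trans <| by
        rw [abs_mul]; exact mul_le_of_le_one_right (abs_nonneg c) (abs_cos_le_one u)
    _ < a := abs_lt_of_sq_lt_sq h ha.le

lemma hasDerivAt_add_two_mul_arctan {a c k : ℝ} (hk : 0 < k) (hka : k ^ 2 = a ^ 2 - c ^ 2)
    (ha : 0 < a) (u : ℝ) :
    HasDerivAt (fun u => u + 2 * arctan (c * sin u / (a - c * cos u + k)))
      (k / (a - c * cos u)) u := by
  have hD : 0 < a - c * cos u := sub_pos.mpr (mul_cos_lt_of_sq_lt_sq (by nlinarith) ha u)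
  have hDk : 0 < a - c * cos u + k := by positivity
  have hw := ((hasDerivAt_sin u).const_mul c).div
    (((hasDerivAt_cos u).const_mul c).const_sub a |>.add_const k) hDk.ne'
  refine ((hasDerivAt_id u).add (hw.arctan.const_mul 2)).congr_deriv ?_
  simp only [Pi.div_apply]
  have := sin_sq_add_cos_sq u
  field_simp
  linear_combination (-(c ^ 2) * (a - c * cos u + k)) * this - (a + k - c * cos u) * hka

lemma hasDerivAt_sin_mul_div_sq {a c p q u : ℝ} (hD : a - c * cos u ≠ 0) :
    HasDerivAt (fun u => sin u * (p + q * cos u) / (a - c * cos u) ^ 2)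
      (((cos u * (p + q * cos u) - q * sin u ^ 2) * (a - c * cos u)
        - 2 * c * sin u ^ 2 * (p + q * cos u)) / (a - c * cos u) ^ 3) u := by
  have h := ((hasDerivAt_sin u).mul (((hasDerivAt_cos u).const_mul q).const_add p)).div
    ((((hasDerivAt_cos u).const_mul c).const_sub a).pow 2) (pow_ne_zero 2 hD)
  refine h.congr_deriv ?_
  simp only [Pi.mul_apply, Pi.pow_apply]
  generalize a - c * cos u = D at hD ⊢
  field_simp
  ring

lemma setIntegral_prod_eq_integral_setIntegral_preimage {α β E : Type*} [MeasurableSpace α]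
    [MeasurableSpace β] [NormedAddCommGroup E] [NormedSpace ℝ E] {μ : Measure α} {ν : Measure β}
    [SFinite μ] [SFinite ν] {s : Set (α × β)} (hs : MeasurableSet s) {f : α × β → E}
    (hf : IntegrableOn f s (μ.prod ν)) :
    ∫ p in s, f p ∂μ.prod ν = ∫ x, ∫ y in Prod.mk x ⁻¹' s, f (x, y) ∂ν ∂μ := by
  rw [← integral_indicator hs, integral_prod _ ((integrable_indicator_iff hs).2 hf)]
  congr 1 with x
  rw [← integral_indicator (measurable_prodMk_left hs)]
  rfl

def triangle (a : ℝ) : Set (ℝ × ℝ) :=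
  {p | 0 < p.1 ∧ p.1 < a ∧ 0 < p.2 ∧ p.2 < a ∧ p.1 + p.2 < a}

lemma measurableSet_triangle (a : ℝ) : MeasurableSet (triangle a) := by
  unfold triangle; measurability

lemma volume_triangle_lt_top (a : ℝ) : volume (triangle a) < ⊤ :=
  (((Metric.isBounded_Ioo 0 a).prod (Metric.isBounded_Ioo 0 a)).subset
    fun _ hp => ⟨⟨hp.1, hp.2.1⟩, hp.2.2.1, hp.2.2.2.1⟩).measure_lt_top

lemma preimage_mk_triangle {a x : ℝ} :
    Prod.mk x ⁻¹' triangle a = if x ∈ Set.Ioo 0 a then Set.Ioo 0 (a - x) else ∅ := by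
  ext y
  split_ifs with hx
  · simp only [triangle, Set.mem_preimage, Set.mem_ofPred_eq, Set.mem_Ioo]
    constructor
    · rintro ⟨-, -, hy, -, hxy⟩; exact ⟨hy, by linarith⟩
    · rintro ⟨hy, hxy⟩; exact ⟨hx.1, hx.2, hy, by linarith [hx.1], by linarith⟩
  · simp only [Set.mem_preimage, Set.mem_empty_iff_false, iff_false]
    exact fun hp => hx ⟨hp.1, hp.2.1⟩

lemma setIntegral_triangle {a : ℝ} {f : ℝ × ℝ → ℝ} (hf : IntegrableOn f (triangle a)) :
    ∫ p in triangle a, f p = ∫ x in Set.Ioo 0 a, ∫ y in 0..a - x, f (x, y) := by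
  rw [Measure.volume_eq_prod, setIntegral_prod_eq_integral_setIntegral_preimage
    (measurableSet_triangle a) hf, ← integral_indicator measurableSet_Ioo]
  congr 1 with x
  by_cases hx : x ∈ Set.Ioo 0 a
  · rw [Set.indicator_of_mem hx, preimage_mk_triangle, if_pos hx,
      intervalIntegral.integral_of_le (by linarith [hx.2]), integral_Ioc_eq_integral_Ioo]
  · rw [Set.indicator_of_notMem hx, preimage_mk_triangle, if_neg hx, Measure.restrict_empty,
      integral_zero_measure]

noncomputable def angleKernel (x y : ℝ) : ℝ :=
  sin x ^ 2 * sin y ^ 2 * sin (x + y) ^ 2 / (sin x ^ 2 + sin y ^ 2 + sin (x + y) ^ 2) ^ 3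

lemma angleKernel_nonneg (x y : ℝ) : 0 ≤ angleKernel x y := by
  unfold angleKernel; positivity

lemma angleKernel_le (x y : ℝ) : angleKernel x y ≤ 1 / 27 :=
  mul_mul_div_add_add_pow_three_le (sq_nonneg _) (sq_nonneg _) (sq_nonneg _)

lemma integrableOn_angleKernel {s : Set (ℝ × ℝ)} (hs : volume s ≠ ⊤) :
    IntegrableOn (fun p => angleKernel p.1 p.2) s := by
  refine Measure.integrableOn_of_bounded (M := 1 / 27) hs ?_ (ae_of_all _ fun p => ?_)
  · unfold angleKernel
    exact (Measurable.div (by fun_prop) (by fun_prop)).aestronglyMeasurable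
  · rw [Real.norm_of_nonneg (angleKernel_nonneg _ _)]
    exact angleKernel_le _ _

/-- `s, c, r` stand for `sin x`, `cos x`, `√(3 + sin² x)`. -/
noncomputable def innerPrimitive (s c r u : ℝ) : ℝ :=
  s * (3 - s ^ 2) / (8 * (3 + s ^ 2) ^ 2 * r) *
      (u + 2 * arctan (c * sin u / (1 + s ^ 2 - c * cos u + s * r)))
    - s ^ 2 / (8 * (3 + s ^ 2) ^ 2) *
      (sin u * (2 * c * (3 + 2 * s ^ 2) + (2 * s ^ 2 - 6) * cos u) / (1 + s ^ 2 - c * cos u) ^ 2)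

lemma hasDerivAt_innerPrimitive {s c r : ℝ} (hs : 0 < s) (hsc : s ^ 2 + c ^ 2 = 1)
    (hr : 0 < r) (hr2 : r ^ 2 = 3 + s ^ 2) (u : ℝ) :
    HasDerivAt (innerPrimitive s c r)
      (s ^ 2 * (c - cos u) ^ 2 / (8 * (1 + s ^ 2 - c * cos u) ^ 3)) u := by
  have hk : (s * r) ^ 2 = (1 + s ^ 2) ^ 2 - c ^ 2 := by linear_combination s ^ 2 * hr2 + hsc
  have hD : 0 < 1 + s ^ 2 - c * cos u :=
    sub_pos.mpr (mul_cos_lt_of_sq_lt_sq (by nlinarith [mul_pos hs hr]) (by positivity) u)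
  have h := ((hasDerivAt_add_two_mul_arctan (by positivity) hk (by positivity) u).const_mul
    (s * (3 - s ^ 2) / (8 * (3 + s ^ 2) ^ 2 * r))).sub
    ((hasDerivAt_sin_mul_div_sq (p := 2 * c * (3 + 2 * s ^ 2)) (q := 2 * s ^ 2 - 6)
      hD.ne').const_mul (s ^ 2 / (8 * (3 + s ^ 2) ^ 2)))
  refine h.congr_deriv ?_
  have := sin_sq_add_cos_sq u
  field_simp
  linear_combination ((1 + s ^ 2 - c * cos u) * (2 * s ^ 2 - 6)
    + 2 * c * (2 * c * (3 + 2 * s ^ 2) + cos u * (2 * s ^ 2 - 6))) * this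
    + (3 + 2 * s ^ 2 - s ^ 4 - (5 * s ^ 2 + 3) * cos u ^ 2) * hsc

noncomputable def sqrtThreeAddSinSq (x : ℝ) : ℝ := √(3 + sin x ^ 2)

lemma sqrtThreeAddSinSq_pos (x : ℝ) : 0 < sqrtThreeAddSinSq x := by
  unfold sqrtThreeAddSinSq; positivity

lemma sqrtThreeAddSinSq_sq (x : ℝ) : sqrtThreeAddSinSq x ^ 2 = 3 + sin x ^ 2 :=
  sq_sqrt (by positivity)

noncomputable def innerIntegral (x : ℝ) : ℝ :=
  sin x * (3 - sin x ^ 2) *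
      (π - x - 2 * arctan (cos x / (2 * sin x + sqrtThreeAddSinSq x)))
      / (4 * (3 + sin x ^ 2) ^ 2 * sqrtThreeAddSinSq x)
    + 3 * sin x * cos x / (8 * (3 + sin x ^ 2) ^ 2)

lemma hasDerivAt_innerPrimitive_comp {x : ℝ} (hx : 0 < sin x) (y : ℝ) :
    HasDerivAt (fun y => innerPrimitive (sin x) (cos x) (sqrtThreeAddSinSq x) (x + 2 * y))
      (angleKernel x y) y := by
  have h := (hasDerivAt_innerPrimitive hx (sin_sq_add_cos_sq x) (sqrtThreeAddSinSq_pos x)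
    (sqrtThreeAddSinSq_sq x) (x + 2 * y)).comp y (((hasDerivAt_id y).const_mul 2).const_add x)
  refine h.congr_deriv ?_
  have hD : 0 < 1 + sin x ^ 2 - cos x * cos (x + 2 * y) := by
    rw [← sin_sq_add_sin_sq_add_sin_add_sq]; positivity
  rw [angleKernel, mul_assoc, sin_sq_mul_sin_add_sq, sin_sq_add_sin_sq_add_sin_add_sq]
  field_simp
  ring

lemma innerPrimitive_two_pi_sub_sub {x : ℝ} (hx : 0 < sin x) :
    innerPrimitive (sin x) (cos x) (sqrtThreeAddSinSq x) (2 * π - x)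
      - innerPrimitive (sin x) (cos x) (sqrtThreeAddSinSq x) x = innerIntegral x := by
  have hr := sqrtThreeAddSinSq_pos x
  have hD : 1 + sin x ^ 2 - cos x * cos x = 2 * sin x ^ 2 := by
    linear_combination -sin_sq_add_cos_sq x
  have harg (t : ℝ) : cos x * t / (2 * sin x ^ 2 + sin x * sqrtThreeAddSinSq x)
      = t / sin x * (cos x / (2 * sin x + sqrtThreeAddSinSq x)) := by
    field_simp
  simp only [innerPrimitive, innerIntegral, sin_two_pi_sub, cos_two_pi_sub, hD, harg,
    neg_div, div_self hx.ne', neg_one_mul, one_mul, arctan_neg]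
  field_simp
  ring

lemma integral_angleKernel {x : ℝ} (hx0 : 0 < x) (hxπ : x < π) :
    ∫ y in 0..π - x, angleKernel x y = innerIntegral x := by
  have hs : 0 < sin x := sin_pos_of_pos_of_lt_pi hx0 hxπ
  have hcont : Continuous (angleKernel x) := by
    refine Continuous.div (by fun_prop) (by fun_prop) fun y => ?_
    positivity
  rw [intervalIntegral.integral_eq_sub_of_hasDerivAt
    (fun y _ => hasDerivAt_innerPrimitive_comp hs y) (hcont.intervalIntegrable _ _)]
  rw [← innerPrimitive_two_pi_sub_sub hs, mul_zero, add_zero,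
    show x + 2 * (π - x) = 2 * π - x by ring]

lemma hasDerivAt_three_add_sin_sq (x : ℝ) :
    HasDerivAt (fun x => 3 + sin x ^ 2) (2 * sin x * cos x) x := by
  simpa [mul_assoc] using ((hasDerivAt_sin x).pow 2).const_add 3

lemma hasDerivAt_sqrtThreeAddSinSq (x : ℝ) :
    HasDerivAt sqrtThreeAddSinSq (sin x * cos x / sqrtThreeAddSinSq x) x := by
  refine ((hasDerivAt_three_add_sin_sq x).sqrt (by positivity)).congr_deriv ?_
  simp only [sqrtThreeAddSinSq]
  ring

lemma hasDerivAt_pi_sub_sub_two_mul_arctan {x : ℝ} (hx : 0 ≤ sin x) :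
    HasDerivAt (fun x => π - x - 2 * arctan (cos x / (2 * sin x + sqrtThreeAddSinSq x)))
      (-(sin x / sqrtThreeAddSinSq x)) x := by
  have hr := sqrtThreeAddSinSq_pos x
  have hden : 0 < 2 * sin x + sqrtThreeAddSinSq x := by positivity
  have hw := (hasDerivAt_cos x).div (((hasDerivAt_sin x).const_mul 2).add
    (hasDerivAt_sqrtThreeAddSinSq x)) hden.ne'
  refine (((hasDerivAt_id x).const_sub π).sub (hw.arctan.const_mul 2)).congr_deriv ?_
  simp only [Pi.add_apply, Pi.div_apply]
  have hsc := sin_sq_add_cos_sq x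
  have hr2 := sqrtThreeAddSinSq_sq x
  field_simp
  linear_combination (3 * sqrtThreeAddSinSq x + 3 * sin x) * hsc
    - (sin x + sqrtThreeAddSinSq x) * hr2

noncomputable def outerPrimitive (x : ℝ) : ℝ :=
  -((π - x - 2 * arctan (cos x / (2 * sin x + sqrtThreeAddSinSq x))) * cos x
      / (8 * (3 + sin x ^ 2) * sqrtThreeAddSinSq x))
    - 1 / (8 * (3 + sin x ^ 2))

lemma hasDerivAt_outerPrimitive {x : ℝ} (hx : 0 ≤ sin x) :
    HasDerivAt outerPrimitive (innerIntegral x) x := by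
  have hr := sqrtThreeAddSinSq_pos x
  have h3 := (hasDerivAt_three_add_sin_sq x).const_mul 8
  have hden : 0 < 8 * (3 + sin x ^ 2) * sqrtThreeAddSinSq x := by positivity
  have h := (((hasDerivAt_pi_sub_sub_two_mul_arctan hx).mul (hasDerivAt_cos x)).div
    (h3.mul (hasDerivAt_sqrtThreeAddSinSq x)) hden.ne').neg.sub
    ((hasDerivAt_const x 1).div h3 (by positivity))
  refine h.congr_deriv ?_
  simp only [innerIntegral, Pi.mul_apply]
  generalize π - x - 2 * arctan (cos x / (2 * sin x + sqrtThreeAddSinSq x)) = B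
  have hsc := sin_sq_add_cos_sq x
  have hr2 := sqrtThreeAddSinSq_sq x
  generalize sqrtThreeAddSinSq x = R at *
  field_simp
  linear_combination 12 * sin x * B * (3 + sin x ^ 2) * hsc
    + (sin x * B * (8 * cos x ^ 2 - 12 + 12 * sin x ^ 2) - 4 * sin x * R * cos x) * hr2

lemma continuous_sqrtThreeAddSinSq : Continuous sqrtThreeAddSinSq := by
  unfold sqrtThreeAddSinSq; fun_prop

lemma continuousOn_innerIntegral : ContinuousOn innerIntegral (Set.Icc 0 π) := by
  have hr := continuous_sqrtThreeAddSinSq.continuousOn (s := Set.Icc 0 π)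
  have harctan : ContinuousOn (fun x => arctan (cos x / (2 * sin x + sqrtThreeAddSinSq x)))
      (Set.Icc 0 π) :=
    continuous_arctan.comp_continuousOn <| ContinuousOn.div (by fun_prop) (by fun_prop)
      fun x hx => by
        have := sin_nonneg_of_nonneg_of_le_pi hx.1 hx.2
        have := sqrtThreeAddSinSq_pos x
        positivity
  unfold innerIntegral
  fun_prop (disch := intro x _; have := sqrtThreeAddSinSq_pos x; positivity)

lemma integral_innerIntegral : ∫ x in 0..π, innerIntegral x = π / (24 * √3) := by
  rw [intervalIntegral.integral_eq_sub_of_hasDerivAt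
    (fun x hx => hasDerivAt_outerPrimitive (by
      rw [Set.uIcc_of_le pi_pos.le] at hx
      exact sin_nonneg_of_nonneg_of_le_pi hx.1 hx.2))
    (continuousOn_innerIntegral.intervalIntegrable_of_Icc pi_pos.le)]
  have h0 : sqrtThreeAddSinSq 0 = √3 := by simp [sqrtThreeAddSinSq]
  have hπ : sqrtThreeAddSinSq π = √3 := by simp [sqrtThreeAddSinSq]
  have h3 : √3 ^ 2 = 3 := sq_sqrt (by norm_num)
  simp only [outerPrimitive, h0, hπ, sin_pi, cos_pi, sin_zero, cos_zero, mul_zero, zero_add,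
    neg_div, arctan_neg]
  field_simp
  ring

/-- The bivariate angle density for triangles with `a²+b²+c²=1` integrates to 1. -/
theorem angle_density_sum_squares_integrates_to_one :
    ∫ p in {p : ℝ × ℝ | 0 < p.1 ∧ p.1 < π ∧ 0 < p.2 ∧ p.2 < π ∧ p.1 + p.2 < π},
      (24 * Real.sqrt 3 / π) * sin p.1 ^ 2 * sin p.2 ^ 2 * sin (p.1 + p.2) ^ 2 /
        (sin p.1 ^ 2 + sin p.2 ^ 2 + sin (p.1 + p.2) ^ 2) ^ 3 = 1 := by
  change ∫ p in triangle π, _ = _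
  have hfun : (fun p : ℝ × ℝ => (24 * √3 / π) * sin p.1 ^ 2 * sin p.2 ^ 2 * sin (p.1 + p.2) ^ 2 /
      (sin p.1 ^ 2 + sin p.2 ^ 2 + sin (p.1 + p.2) ^ 2) ^ 3)
      = fun p => (24 * √3 / π) * angleKernel p.1 p.2 := by
    ext p; simp only [angleKernel]; ring
  rw [hfun, integral_const_mul,
    setIntegral_triangle (integrableOn_angleKernel (volume_triangle_lt_top π).ne),
    setIntegral_congr_fun measurableSet_Ioo fun x hx => integral_angleKernel hx.1 hx.2,
    ← integral_Ioc_eq_integral_Ioo, ← intervalIntegral.integral_of_le pi_pos.le,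
    integral_innerIntegral]
  field_simp
end

section
/- The integral over the triangle {(x,y) : 0<x<π, 0<y<π, x+y<π} of (2/π)·sin(x)·sin(y)·sin(x+y)/(sin(x)²+sin(y)²)² equals 1. -/
/-!
By the law of sines, the triangle with angles `α`, `β` and `a² + b² = 1` has
`a² = sin² α / (sin² α + sin² β)`, and its included angle is `γ = π - α - β`. The density is
`1/π` (the density of `(a², γ)`) times the Jacobian of `(α, β) ↦ (a², γ)`: on each line
`α + β = z` it is `1/π` times the derivative of `α ↦ a²`, which runs from `0` to `1`. After the
shear `(z, α) ↦ (α, z - α)` Tonelli's theorem reduces the integral to `∫ z in (0, π), 1/π = 1`.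
-/

open MeasureTheory Real Set
open scoped ENNReal

theorem setLIntegral_prod_eq_lintegral_setLIntegral {α β : Type*} [MeasurableSpace α]
    [MeasurableSpace β] {μ : Measure α} {ν : Measure β} [SFinite ν] {T : Set (α × β)}
    (hT : MeasurableSet T) {f : α × β → ℝ≥0∞} (hf : Measurable f) :
    ∫⁻ p in T, f p ∂μ.prod ν = ∫⁻ x, ∫⁻ y in Prod.mk x ⁻¹' T, f (x, y) ∂ν ∂μ := by
  rw [← lintegral_indicator hT, lintegral_prod _ (hf.indicator hT).aemeasurable]
  refine lintegral_congr fun x => ?_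
  rw [← lintegral_indicator (measurable_prodMk_left hT)]
  rfl

theorem lintegral_Ioo_ofReal_eq_sub_of_hasDerivAt {f f' : ℝ → ℝ} {a b : ℝ} (hab : a ≤ b)
    (hcont : ContinuousOn f (Icc a b)) (hderiv : ∀ x ∈ Ioo a b, HasDerivAt f (f' x) x)
    (hf' : ∀ x ∈ Ioo a b, 0 ≤ f' x) :
    ∫⁻ x in Ioo a b, ENNReal.ofReal (f' x) = ENNReal.ofReal (f b - f a) := by
  have hint : IntegrableOn f' (Ioc a b) :=
    intervalIntegral.integrableOn_deriv_of_nonneg hcont hderiv hf'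
  rw [← intervalIntegral.integral_eq_sub_of_hasDerivAt_of_le hab hcont hderiv
      ((intervalIntegrable_iff_integrableOn_Ioc_of_le hab).2 hint),
    intervalIntegral.integral_of_le hab, integral_Ioc_eq_integral_Ioo,
    ofReal_integral_eq_lintegral_ofReal (hint.mono_set Ioo_subset_Ioc_self)
      ((ae_restrict_iff' measurableSet_Ioo).2 (ae_of_all _ hf'))]

def angleTriangle : Set (ℝ × ℝ) :=
  {p | 0 < p.1 ∧ p.1 < π ∧ 0 < p.2 ∧ p.2 < π ∧ p.1 + p.2 < π}

noncomputable def angleDensity (p : ℝ × ℝ) : ℝ :=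
  (2 / π) * sin p.1 * sin p.2 * sin (p.1 + p.2) / (sin p.1 ^ 2 + sin p.2 ^ 2) ^ 2

noncomputable def sideSq (z x : ℝ) : ℝ :=
  sin x ^ 2 / (sin x ^ 2 + sin (z - x) ^ 2)

theorem measurableSet_angleTriangle : MeasurableSet angleTriangle := by
  unfold angleTriangle; measurability

theorem measurable_angleDensity : Measurable angleDensity := by
  unfold angleDensity; fun_prop

theorem angleDensity_nonneg {p : ℝ × ℝ} (hp : p ∈ angleTriangle) : 0 ≤ angleDensity p := by
  obtain ⟨h1, h2, h3, h4, h5⟩ := hp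
  have := sin_pos_of_pos_of_lt_pi h1 h2
  have := sin_pos_of_pos_of_lt_pi h3 h4
  have := sin_pos_of_pos_of_lt_pi (add_pos h1 h3) h5
  unfold angleDensity
  positivity

theorem hasDerivAt_sideSq_div_pi {z x : ℝ} (hx : sin x ^ 2 + sin (z - x) ^ 2 ≠ 0) :
    HasDerivAt (fun t => sideSq z t / π) (angleDensity (x, z - x)) x := by
  have hnum := (hasDerivAt_sin x).fun_pow 2
  have hden := hnum.add (((hasDerivAt_id x).const_sub z).sin.fun_pow 2)
  refine ((hnum.div hden hx).div_const π).congr_deriv ?_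
  simp only [angleDensity, Pi.add_apply, id, sin_add]
  field_simp
  ring

theorem sin_sq_add_sin_sub_sq_pos {z x : ℝ} (hz : z ∈ Ioo 0 π) (hx : x ∈ Icc 0 z) :
    0 < sin x ^ 2 + sin (z - x) ^ 2 := by
  rcases hx.1.eq_or_lt with rfl | hx0
  · simpa using pow_pos (sin_pos_of_pos_of_lt_pi hz.1 hz.2) 2
  · have := sin_pos_of_pos_of_lt_pi hx0 (hx.2.trans_lt hz.2)
    positivity

theorem lintegral_angleDensity_line_Ioo {z : ℝ} (hz : z ∈ Ioo 0 π) :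
    ∫⁻ x in Ioo 0 z, ENNReal.ofReal (angleDensity (x, z - x)) = ENNReal.ofReal π⁻¹ := by
  have hderiv : ∀ x ∈ Icc 0 z, HasDerivAt (fun t => sideSq z t / π) (angleDensity (x, z - x)) x :=
    fun x hx => hasDerivAt_sideSq_div_pi (sin_sq_add_sin_sub_sq_pos hz hx).ne'
  rw [lintegral_Ioo_ofReal_eq_sub_of_hasDerivAt hz.1.le
    (fun x hx => (hderiv x hx).continuousAt.continuousWithinAt)
    (fun x hx => hderiv x (Ioo_subset_Icc_self hx))
    (fun x hx => angleDensity_nonneg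
      ⟨hx.1, hx.2.trans hz.2, sub_pos.2 hx.2, by dsimp only; linarith [hx.1, hz.2],
        by simpa using hz.2⟩)]
  have := sin_pos_of_pos_of_lt_pi hz.1 hz.2
  simp [sideSq, this.ne']

theorem lintegral_angleDensity_line (z : ℝ) :
    ∫⁻ x in {x | (x, z - x) ∈ angleTriangle}, ENNReal.ofReal (angleDensity (x, z - x)) =
      (Ioo 0 π).indicator (fun _ => ENNReal.ofReal π⁻¹) z := by
  by_cases hz : z ∈ Ioo 0 π
  · have hsection : {x | (x, z - x) ∈ angleTriangle} = Ioo 0 z := by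
      ext x
      simp only [angleTriangle, mem_ofPred_eq, mem_Ioo, add_sub_cancel]
      constructor
      · rintro ⟨h1, -, h3, -, -⟩
        exact ⟨h1, by linarith⟩
      · rintro ⟨h1, h2⟩
        exact ⟨h1, by linarith [hz.2], by linarith, by linarith [hz.2], hz.2⟩
    rw [indicator_of_mem hz, hsection, lintegral_angleDensity_line_Ioo hz]
  · have hsection : {x | (x, z - x) ∈ angleTriangle} = ∅ := by
      refine eq_empty_of_forall_notMem ?_
      rintro x ⟨h1, -, h3, -, h5⟩
      exact hz ⟨by dsimp only at h3; linarith, by simpa using h5⟩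
    rw [indicator_of_notMem hz, hsection, Measure.restrict_empty, lintegral_zero_measure]

/-- The bivariate angle density for triangles with `a² + b² = 1` and uniform
included angle `γ` integrates to 1. -/
theorem angle_density_sum_two_squares_integrates_to_one :
    ∫ p in {p : ℝ × ℝ | 0 < p.1 ∧ p.1 < π ∧ 0 < p.2 ∧ p.2 < π ∧ p.1 + p.2 < π},
      (2 / π) * sin p.1 * sin p.2 * sin (p.1 + p.2) /
        (sin p.1 ^ 2 + sin p.2 ^ 2) ^ 2 = 1 := by
  change ∫ p in angleTriangle, angleDensity p = 1
  have hS := measurableSet_angleTriangle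
  have hdens := measurable_angleDensity
  have hshear := measurePreserving_prod_sub_swap (volume : Measure ℝ) volume
  calc ∫ p in angleTriangle, angleDensity p
      = (∫⁻ p in angleTriangle, ENNReal.ofReal (angleDensity p)).toReal :=
        integral_eq_lintegral_of_nonneg_ae
          (ae_restrict_of_forall_mem hS fun _ => angleDensity_nonneg) hdens.aestronglyMeasurable
    _ = (∫⁻ z, ∫⁻ x in {x | (x, z - x) ∈ angleTriangle},
          ENNReal.ofReal (angleDensity (x, z - x))).toReal := by
        rw [Measure.volume_eq_prod, ← hshear.setLIntegral_comp_preimage hS hdens.ennreal_ofReal,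
          setLIntegral_prod_eq_lintegral_setLIntegral (hS.preimage hshear.measurable)
            (f := fun q => ENNReal.ofReal (angleDensity (q.2, q.1 - q.2)))
            (hdens.comp hshear.measurable).ennreal_ofReal]
        rfl
    _ = (∫⁻ z, (Ioo 0 π).indicator (fun _ => ENNReal.ofReal π⁻¹) z).toReal := by
        simp_rw [lintegral_angleDensity_line]
    _ = 1 := by
        rw [lintegral_indicator_const measurableSet_Ioo, Real.volume_Ioo, sub_zero,
          ← ENNReal.ofReal_mul (inv_nonneg.2 pi_pos.le), inv_mul_cancel₀ pi_ne_zero,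
          ENNReal.toReal_ofReal zero_le_one]
end
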